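/- arXiv:2401.02515 — 7 statements merged into one kernel-verified Lean document; each statement's English description precedes it below -/
import Mathlib

section
/- Let (λ(n))_{n∈ℕ} be a Vershik–Kerov sequence with associated limits α_i = lim_{n→∞} λ(n)_i/n, β = lim_{n→∞} p_1(λ(n))/n and δ = lim_{n→∞} p_2(λ(n))/n². Then the series Σ_{i=1}^∞ α_i² converges and γ := δ − Σ_{i=1}^∞ α_i² ≥ 0; in particular the sequence α = (α_i)_{i∈ℕ} is square-summable. -/
/-! For each `k` and `n`, `∑_{i<k} (λ(n)_i / n)² ≤ p₂(λ(n)) / n²`; letting `n → ∞` gives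
`∑_{i<k} α_i² ≤ δ`, so the partial sums of `∑ α_i²` are bounded by `δ`. -/

open Filter Topology

/-- The order `x ≪ y` : `|x| < |y|`, or `|x| = |y|` and `x ≤ y`. -/
def VKle (x y : ℝ) : Prop := |x| < |y| ∨ (|x| = |y| ∧ x ≤ y)

open Finset

theorem Finset.sum_range_le_sum_range_of_eq_zero {M : Type*} [AddCommMonoid M] [PartialOrder M]
    [IsOrderedAddMonoid M] {f : ℕ → M} {n : ℕ} (hf_nonneg : ∀ i, 0 ≤ f i)
    (hf_zero : ∀ i, n ≤ i → f i = 0) (k : ℕ) :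
    ∑ i ∈ range k, f i ≤ ∑ i ∈ range n, f i := by
  rcases le_total k n with hkn | hnk
  · exact sum_le_sum_of_subset_of_nonneg (range_subset_range.2 hkn) fun i _ _ => hf_nonneg i
  · refine (sum_subset (range_subset_range.2 hnk) fun i _ hi => hf_zero i ?_).ge
    simpa using hi

theorem sum_range_div_sq_le_of_eq_zero {x : ℕ → ℝ} {n : ℕ} (hx : ∀ i, n ≤ i → x i = 0)
    (c : ℝ) (k : ℕ) :
    ∑ i ∈ range k, (x i / c) ^ 2 ≤ (∑ i ∈ range n, x i ^ 2) / c ^ 2 := by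
  simp only [div_pow, ← sum_div]
  refine div_le_div_of_nonneg_right ?_ (sq_nonneg c)
  exact sum_range_le_sum_range_of_eq_zero (fun i => sq_nonneg (x i))
    (fun i hi => by rw [hx i hi, sq, zero_mul]) k

theorem vk_gamma_nonneg_general (Λ : ℕ → ℕ → ℝ) (α : ℕ → ℝ) (δ : ℝ)
    (hpad : ∀ n i, n ≤ i → Λ n i = 0)
    (hα : ∀ i, Tendsto (fun n : ℕ => Λ n i / (n : ℝ)) atTop (𝓝 (α i)))
    (hδ : Tendsto (fun n : ℕ => (∑ i ∈ Finset.range n, (Λ n i) ^ 2) / (n : ℝ) ^ 2)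
      atTop (𝓝 δ)) :
    Summable (fun i => (α i) ^ 2) ∧ 0 ≤ δ - ∑' i, (α i) ^ 2 := by
  have partial_sum_le : ∀ k, ∑ i ∈ range k, α i ^ 2 ≤ δ := fun k =>
    le_of_tendsto_of_tendsto' (tendsto_finsetSum _ fun i _ => (hα i).pow 2) hδ
      fun n => sum_range_div_sq_le_of_eq_zero (hpad n) n k
  have summable : Summable fun i => α i ^ 2 :=
    summable_of_sum_range_le (fun i => sq_nonneg _) partial_sum_le
  exact ⟨summable, sub_nonneg.2 (summable.tsum_le_of_sum_range_le partial_sum_le)⟩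

/-- If `(λ(n))` is a Vershik–Kerov sequence with limits `α_i`, `β`, `δ`,
then `∑ α_i²` converges and `γ := δ - ∑ α_i² ≥ 0`. -/
theorem vk_gamma_nonneg (Λ : ℕ → ℕ → ℝ) (α : ℕ → ℝ) (β δ : ℝ)
    (hpad : ∀ n i, n ≤ i → Λ n i = 0)
    (hdec : ∀ n i, i + 1 < n → VKle (Λ n (i + 1)) (Λ n i))
    (hα : ∀ i, Tendsto (fun n : ℕ => Λ n i / (n : ℝ)) atTop (𝓝 (α i)))
    (hβ : Tendsto (fun n : ℕ => (∑ i ∈ Finset.range n, Λ n i) / (n : ℝ)) atTop (𝓝 β))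
    (hδ : Tendsto (fun n : ℕ => (∑ i ∈ Finset.range n, (Λ n i) ^ 2) / (n : ℝ) ^ 2)
      atTop (𝓝 δ)) :
    Summable (fun i => (α i) ^ 2) ∧ 0 ≤ δ - ∑' i, (α i) ^ 2 :=
  vk_gamma_nonneg_general Λ α δ hpad hα hδ
end

section
/- Let (λ(n))_{n∈ℕ} be a Vershik–Kerov sequence with associated limits α_i = lim_{n→∞} λ(n)_i/n and δ = lim_{n→∞} p_2(λ(n))/n². If in addition λ(n)_i ≥ 0 for all 1 ≤ i ≤ n and all n ∈ ℕ, then δ = Σ_{i=1}^∞ α_i², i.e. the VK parameter γ equals 0. -/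
open Filter Topology

/-!
Fatou's lemma (for the counting measure) gives `∑ α_i² ≤ δ` without any sign condition. For the
converse, a nonnegative decreasing tuple satisfies `(k + 1) λ_k ≤ p₁(λ)`, hence
`∑_{i ≥ k} λ_i² ≤ λ_k p₁(λ) ≤ p₁(λ)² / (k + 1)`. After dividing by `n²` and letting `n → ∞`,
`δ ≤ ∑_{i < k} α_i² + β² / (k + 1)` for every `k`, and `k → ∞` closes the gap.
-/

open Finset

theorem VKle.le_of_nonneg {x y : ℝ} (h : VKle x y) (hx : 0 ≤ x) (hy : 0 ≤ y) : x ≤ y := by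
  rcases h with h | ⟨-, h⟩
  · rw [abs_of_nonneg hx, abs_of_nonneg hy] at h
    exact h.le
  · exact h

theorem antitoneOn_Iio_of_succ_le {β : Type*} [Preorder β] {x : ℕ → β} {n : ℕ}
    (h : ∀ i, i + 1 < n → x (i + 1) ≤ x i) : AntitoneOn x (Set.Iio n) := by
  intro i _ j hj hij
  induction j, hij using Nat.le_induction with
  | base => exact le_rfl
  | succ j _ ih => exact (h j hj).trans (ih (Nat.lt_of_succ_lt hj))

theorem succ_mul_le_sum_range_of_antitoneOn {x : ℕ → ℝ} {n k : ℕ} (hk : k < n)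
    (hx : AntitoneOn x (Set.Iio n)) (h0 : ∀ i < n, 0 ≤ x i) :
    ((k : ℝ) + 1) * x k ≤ ∑ i ∈ range n, x i :=
  calc ((k : ℝ) + 1) * x k = ∑ _i ∈ range (k + 1), x k := by simp [mul_comm]
    _ ≤ ∑ i ∈ range (k + 1), x i := sum_le_sum fun i hi =>
        hx (Set.mem_Iio.2 (by simp at hi; omega)) (Set.mem_Iio.2 hk) (by simp at hi; omega)
    _ ≤ ∑ i ∈ range n, x i := sum_le_sum_of_subset_of_nonneg (range_subset_range.2 hk)
        fun i hi _ => h0 i (mem_range.1 hi)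

theorem sum_Ico_sq_le_of_antitoneOn {x : ℕ → ℝ} {n k : ℕ} (hk : k < n)
    (hx : AntitoneOn x (Set.Iio n)) (h0 : ∀ i < n, 0 ≤ x i) :
    ∑ i ∈ Ico k n, x i ^ 2 ≤ (∑ i ∈ range n, x i) ^ 2 / (k + 1) := by
  set S := ∑ i ∈ range n, x i
  have hS : 0 ≤ S := sum_nonneg fun i hi => h0 i (mem_range.1 hi)
  have hxk := h0 k hk
  have hkS := succ_mul_le_sum_range_of_antitoneOn hk hx h0
  calc ∑ i ∈ Ico k n, x i ^ 2 ≤ ∑ i ∈ Ico k n, x k * x i := by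
        refine sum_le_sum fun i hi => ?_
        obtain ⟨hki, hin⟩ := mem_Ico.1 hi
        have := hx (Set.mem_Iio.2 hk) (Set.mem_Iio.2 hin) hki
        nlinarith [h0 i hin]
    _ = x k * ∑ i ∈ Ico k n, x i := (mul_sum _ _ _).symm
    _ ≤ x k * S := by
        refine mul_le_mul_of_nonneg_left (sum_le_sum_of_subset_of_nonneg ?_ ?_) hxk
        · exact fun i hi => mem_range.2 (mem_Ico.1 hi).2
        · exact fun i hi _ => h0 i (mem_range.1 hi)
    _ ≤ S ^ 2 / (k + 1) := by
        rw [le_div_iff₀ (by positivity)]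
        nlinarith

theorem sum_range_sq_le_of_antitoneOn {x : ℕ → ℝ} {n k : ℕ} (hk : k < n)
    (hx : AntitoneOn x (Set.Iio n)) (h0 : ∀ i < n, 0 ≤ x i) :
    ∑ i ∈ range n, x i ^ 2 ≤ ∑ i ∈ range k, x i ^ 2 + (∑ i ∈ range n, x i) ^ 2 / (k + 1) := by
  rw [← sum_range_add_sum_Ico _ hk.le]
  exact add_le_add_right (sum_Ico_sq_le_of_antitoneOn hk hx h0) _

section Limits

variable {Λ : ℕ → ℕ → ℝ} {α : ℕ → ℝ} {β δ : ℝ}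

theorem sum_range_sq_le_of_tendsto
    (hα : ∀ i, Tendsto (fun n : ℕ => Λ n i / (n : ℝ)) atTop (𝓝 (α i)))
    (hδ : Tendsto (fun n : ℕ => (∑ i ∈ range n, (Λ n i) ^ 2) / (n : ℝ) ^ 2) atTop (𝓝 δ))
    (k : ℕ) : ∑ i ∈ range k, α i ^ 2 ≤ δ := by
  refine le_of_tendsto_of_tendsto (tendsto_finsetSum _ fun i _ => (hα i).pow 2) hδ ?_
  filter_upwards [eventually_ge_atTop k] with n hkn
  simp only [div_pow, ← sum_div]
  gcongr

theorem le_sum_range_sq_add_of_tendsto (hanti : ∀ n, AntitoneOn (Λ n) (Set.Iio n))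
    (hpos : ∀ n, ∀ i < n, 0 ≤ Λ n i)
    (hα : ∀ i, Tendsto (fun n : ℕ => Λ n i / (n : ℝ)) atTop (𝓝 (α i)))
    (hβ : Tendsto (fun n : ℕ => (∑ i ∈ range n, Λ n i) / (n : ℝ)) atTop (𝓝 β))
    (hδ : Tendsto (fun n : ℕ => (∑ i ∈ range n, (Λ n i) ^ 2) / (n : ℝ) ^ 2) atTop (𝓝 δ))
    (k : ℕ) : δ ≤ ∑ i ∈ range k, α i ^ 2 + β ^ 2 / (k + 1) := by
  refine le_of_tendsto_of_tendsto hδ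
    ((tendsto_finsetSum _ fun i _ => (hα i).pow 2).add ((hβ.pow 2).div_const _)) ?_
  filter_upwards [eventually_gt_atTop k] with n hkn
  have hn : (0 : ℝ) < n := by exact_mod_cast k.zero_le.trans_lt hkn
  calc (∑ i ∈ range n, Λ n i ^ 2) / (n : ℝ) ^ 2
      ≤ (∑ i ∈ range k, Λ n i ^ 2 + (∑ i ∈ range n, Λ n i) ^ 2 / (k + 1)) / (n : ℝ) ^ 2 := by
        gcongr
        exact sum_range_sq_le_of_antitoneOn hkn (hanti n) (hpos n)
    _ = ∑ i ∈ range k, (Λ n i / n) ^ 2 + ((∑ i ∈ range n, Λ n i) / n) ^ 2 / (k + 1) := by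
        simp only [div_pow, ← sum_div]
        field_simp

end Limits

theorem vk_gamma_zero_of_nonneg_general (Λ : ℕ → ℕ → ℝ) (α : ℕ → ℝ) (β δ : ℝ)
    (hdec : ∀ n i, i + 1 < n → VKle (Λ n (i + 1)) (Λ n i))
    (hα : ∀ i, Tendsto (fun n : ℕ => Λ n i / (n : ℝ)) atTop (𝓝 (α i)))
    (hβ : Tendsto (fun n : ℕ => (∑ i ∈ Finset.range n, Λ n i) / (n : ℝ)) atTop (𝓝 β))
    (hδ : Tendsto (fun n : ℕ => (∑ i ∈ Finset.range n, (Λ n i) ^ 2) / (n : ℝ) ^ 2)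
      atTop (𝓝 δ))
    (hpos : ∀ n i, 0 ≤ Λ n i) :
    Summable (fun i => (α i) ^ 2) ∧ δ = ∑' i, (α i) ^ 2 := by
  have hanti n : AntitoneOn (Λ n) (Set.Iio n) := antitoneOn_Iio_of_succ_le fun i hi =>
    (hdec n i hi).le_of_nonneg (hpos n (i + 1)) (hpos n i)
  have hlow := sum_range_sq_le_of_tendsto hα hδ
  have hsum : Summable (fun i => α i ^ 2) := summable_of_sum_range_le (fun i => sq_nonneg _) hlow
  refine ⟨hsum, le_antisymm ?_ (hsum.tsum_le_of_sum_range_le hlow)⟩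
  have hlim : Tendsto (fun k : ℕ => ∑ i ∈ range k, α i ^ 2 + β ^ 2 / ((k : ℝ) + 1)) atTop
      (𝓝 (∑' i, α i ^ 2 + 0)) :=
    hsum.hasSum.tendsto_sum_nat.add (tendsto_const_nhds.div_atTop
      (tendsto_atTop_add_const_right _ _ tendsto_natCast_atTop_atTop))
  rw [add_zero] at hlim
  exact ge_of_tendsto' hlim
    (le_sum_range_sq_add_of_tendsto hanti (fun n i _ => hpos n i) hα hβ hδ)

/-- If `(λ(n))` is a Vershik–Kerov sequence with nonnegative entries,
then `δ = ∑ α_i²`, i.e. the VK parameter `γ` is `0`. -/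
theorem vk_gamma_zero_of_nonneg (Λ : ℕ → ℕ → ℝ) (α : ℕ → ℝ) (β δ : ℝ)
    (hpad : ∀ n i, n ≤ i → Λ n i = 0)
    (hdec : ∀ n i, i + 1 < n → VKle (Λ n (i + 1)) (Λ n i))
    (hα : ∀ i, Tendsto (fun n : ℕ => Λ n i / (n : ℝ)) atTop (𝓝 (α i)))
    (hβ : Tendsto (fun n : ℕ => (∑ i ∈ Finset.range n, Λ n i) / (n : ℝ)) atTop (𝓝 β))
    (hδ : Tendsto (fun n : ℕ => (∑ i ∈ Finset.range n, (Λ n i) ^ 2) / (n : ℝ) ^ 2)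
      atTop (𝓝 δ))
    (hpos : ∀ n i, 0 ≤ Λ n i) :
    Summable (fun i => (α i) ^ 2) ∧ δ = ∑' i, (α i) ^ 2 :=
  vk_gamma_zero_of_nonneg_general Λ α β δ hdec hα hβ hδ hpos
end

section
/- Let (λ(n))_{n∈ℕ} be a Vershik–Kerov sequence with associated limits α_i = lim_{n→∞} λ(n)_i/n. Then for every integer m ≥ 3, the series Σ_{i=1}^∞ α_i^m converges absolutely and lim_{n→∞} p_m(λ(n))/n^m = Σ_{i=1}^∞ α_i^m. -/
/-! Since `|λ(n)_i|` decreases in `i`, the bound `p_2(λ(n)) ≤ C n²` forces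
`|λ(n)_i / n| ≤ √(C / (i + 1))` uniformly in `n`. For `m ≥ 3` the `m`-th powers of this bound
are summable, so Tannery's theorem (dominated convergence for series) lets us pass to the limit
termwise in `p_m(λ(n)) / n^m = ∑ᵢ (λ(n)_i / n)^m`. -/

open Filter Topology

namespace VKle

lemma abs_le {x y : ℝ} (h : VKle x y) : |x| ≤ |y| := by
  rcases h with h | ⟨h, -⟩
  exacts [h.le, h.le]

end VKle

section DecreasingTuple

variable {f : ℕ → ℝ} {n : ℕ}

lemma antitone_abs_of_VKle (hpad : ∀ i, n ≤ i → f i = 0)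
    (hdec : ∀ i, i + 1 < n → VKle (f (i + 1)) (f i)) : Antitone fun i => |f i| := by
  refine antitone_nat_of_succ_le fun i => ?_
  by_cases hi : i + 1 < n
  · exact (hdec i hi).abs_le
  · simp [hpad (i + 1) (by omega)]

lemma sq_mul_succ_le_sum_range_sq (hf : Antitone fun i => |f i|)
    (hpad : ∀ i, n ≤ i → f i = 0) (i : ℕ) :
    f i ^ 2 * (i + 1) ≤ ∑ j ∈ Finset.range n, f j ^ 2 := by
  by_cases hi : n ≤ i
  · rw [hpad i hi, zero_pow two_ne_zero, zero_mul]
    exact Finset.sum_nonneg fun _ _ => sq_nonneg _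
  calc f i ^ 2 * (i + 1) = ∑ _j ∈ Finset.range (i + 1), f i ^ 2 := by simp [mul_comm]
    _ ≤ ∑ j ∈ Finset.range (i + 1), f j ^ 2 := by
        refine Finset.sum_le_sum fun j hj => ?_
        rw [← sq_abs (f i), ← sq_abs (f j)]
        exact pow_le_pow_left₀ (abs_nonneg _) (hf (Finset.mem_range_succ_iff.mp hj)) 2
    _ ≤ ∑ j ∈ Finset.range n, f j ^ 2 :=
        Finset.sum_le_sum_of_subset_of_nonneg (Finset.range_subset_range.mpr (by omega))
          fun _ _ _ => sq_nonneg _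

lemma abs_div_le_sqrt_div_succ (hf : Antitone fun i => |f i|)
    (hpad : ∀ i, n ≤ i → f i = 0) {C : ℝ}
    (hC : (∑ j ∈ Finset.range n, f j ^ 2) / (n : ℝ) ^ 2 ≤ C) (i : ℕ) :
    |f i / n| ≤ √(C / (i + 1)) := by
  refine Real.abs_le_sqrt ?_
  rw [le_div_iff₀ (by positivity), div_pow, div_mul_eq_mul_div]
  exact (div_le_div_of_nonneg_right (sq_mul_succ_le_sum_range_sq hf hpad i)
    (by positivity)).trans hC

lemma sum_range_pow_div_eq_tsum (hpad : ∀ i, n ≤ i → f i = 0) {m : ℕ} (hm : m ≠ 0) :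
    (∑ i ∈ Finset.range n, f i ^ m) / (n : ℝ) ^ m = ∑' i, (f i / n) ^ m := by
  rw [tsum_eq_sum (s := Finset.range n) fun i hi => by simp [hpad i (by simpa using hi), hm],
    Finset.sum_div]
  simp only [div_pow]

end DecreasingTuple

lemma summable_sqrt_div_succ_pow (C : ℝ) {m : ℕ} (hm : 3 ≤ m) :
    Summable fun i : ℕ => √(C / (i + 1)) ^ m := by
  have hpow : ∀ i : ℕ, √((i : ℝ) + 1) ^ m = |(i : ℝ) + 1| ^ ((m : ℝ) / 2) := fun i => by
    rw [abs_of_nonneg (by positivity), Real.rpow_div_two_eq_sqrt _ (by positivity),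
      Real.rpow_natCast]
  have hp : Summable fun i : ℕ => 1 / |(i : ℝ) + 1| ^ ((m : ℝ) / 2) :=
    (Real.summable_one_div_nat_add_rpow 1 _).mpr (by
      rw [lt_div_iff₀ two_pos]
      exact_mod_cast (by omega : 1 * 2 < m))
  refine (hp.mul_left (√C ^ m)).congr fun i => ?_
  rw [Real.sqrt_div' _ (by positivity), div_pow, hpow, mul_one_div]

theorem vk_power_sum_limit_general (Λ : ℕ → ℕ → ℝ) (α : ℕ → ℝ) (δ : ℝ)
    (hpad : ∀ n i, n ≤ i → Λ n i = 0)
    (hdec : ∀ n i, i + 1 < n → VKle (Λ n (i + 1)) (Λ n i))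
    (hα : ∀ i, Tendsto (fun n : ℕ => Λ n i / (n : ℝ)) atTop (𝓝 (α i)))
    (hδ : Tendsto (fun n : ℕ => (∑ i ∈ Finset.range n, (Λ n i) ^ 2) / (n : ℝ) ^ 2)
      atTop (𝓝 δ)) :
    ∀ m : ℕ, 3 ≤ m →
      Summable (fun i => |α i| ^ m) ∧
      Tendsto (fun n : ℕ => (∑ i ∈ Finset.range n, (Λ n i) ^ m) / (n : ℝ) ^ m)
        atTop (𝓝 (∑' i, (α i) ^ m)) := by
  obtain ⟨C, hC⟩ := hδ.bddAbove_range
  have hbound : ∀ n i, |Λ n i / n| ≤ √(C / (i + 1)) := fun n =>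
    abs_div_le_sqrt_div_succ (antitone_abs_of_VKle (hpad n) (hdec n)) (hpad n) (hC ⟨n, rfl⟩)
  have hαbound : ∀ i, |α i| ≤ √(C / (i + 1)) := fun i =>
    le_of_tendsto (hα i).abs (Eventually.of_forall fun n => hbound n i)
  intro m hm
  have hdom := summable_sqrt_div_succ_pow C hm
  refine ⟨hdom.of_nonneg_of_le (fun i => by positivity)
    fun i => pow_le_pow_left₀ (abs_nonneg _) (hαbound i) m, ?_⟩
  simp only [sum_range_pow_div_eq_tsum (hpad _) (by omega : m ≠ 0)]
  refine tendsto_tsum_of_dominated_convergence hdom (fun i => (hα i).pow m)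
    (Eventually.of_forall fun n i => ?_)
  rw [norm_pow, Real.norm_eq_abs]
  exact pow_le_pow_left₀ (abs_nonneg _) (hbound n i) m

/-- If `(λ(n))` is a Vershik–Kerov sequence with limits `α_i`, then for every
`m ≥ 3` the series `∑ α_i^m` converges absolutely and `p_m(λ(n))/n^m → ∑ α_i^m`. -/
theorem vk_power_sum_limit (Λ : ℕ → ℕ → ℝ) (α : ℕ → ℝ) (β δ : ℝ)
    (hpad : ∀ n i, n ≤ i → Λ n i = 0)
    (hdec : ∀ n i, i + 1 < n → VKle (Λ n (i + 1)) (Λ n i))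
    (hα : ∀ i, Tendsto (fun n : ℕ => Λ n i / (n : ℝ)) atTop (𝓝 (α i)))
    (hβ : Tendsto (fun n : ℕ => (∑ i ∈ Finset.range n, Λ n i) / (n : ℝ)) atTop (𝓝 β))
    (hδ : Tendsto (fun n : ℕ => (∑ i ∈ Finset.range n, (Λ n i) ^ 2) / (n : ℝ) ^ 2)
      atTop (𝓝 δ)) :
    ∀ m : ℕ, 3 ≤ m →
      Summable (fun i => |α i| ^ m) ∧
      Tendsto (fun n : ℕ => (∑ i ∈ Finset.range n, (Λ n i) ^ m) / (n : ℝ) ^ m)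
        atTop (𝓝 (∑' i, (α i) ^ m)) :=
  vk_power_sum_limit_general Λ α δ hpad hdec hα hδ
end

section
/- Fix k > 0 and let ω = (α, β, γ) ∈ Ω. If α is not identically zero, set S := ℂ \ ((−∞, −1/|α_1|] ∪ [1/|α_1|, ∞)); if α ≡ 0 set S := ℂ. Then the infinite product Ψ(ω;z) = e^{kβz + kγz²/2} ∏_{l=1}^∞ e^{−kα_l z}(1 − α_l z)^{−k} converges locally uniformly on S and defines a holomorphic function on S. -/
/-!
On the open region `U = {z | Im z ≠ 0 ∨ |α₀| |Re z| < 1} ⊇ S` every `1 - α_l z` lies in the slit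
plane, since `|α_l| ≤ |α₀|`, so each factor is `exp` of the holomorphic function
`-kα_l z - k log (1 - α_l z) = -k (log (1 + w) - w)` with `w = -α_l z`, of size `O(|k| α_l² |z|²)`.
As `∑ α_l² < ∞`, the Weierstrass M-test makes the series of these logarithms converge uniformly on
bounded sets; the exponential of a locally uniformly convergent sequence of continuous functions
converges locally uniformly, and the limit is holomorphic by Weierstrass' theorem.
-/

open Filter Topology

open Complex Finset

theorem TendstoLocallyUniformlyOn.cexp {X ι : Type*} [TopologicalSpace X] [LocallyCompactSpace X]
    {p : Filter ι} {F : ι → X → ℂ} {f : X → ℂ} {U : Set X} (h : TendstoLocallyUniformlyOn F f p U)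
    (hF : ∃ᶠ n in p, ContinuousOn (F n) U) (hU : IsOpen U) :
    TendstoLocallyUniformlyOn (fun n x => cexp (F n x)) (fun x => cexp (f x)) p U := by
  have hf := h.continuousOn hF
  rw [tendstoLocallyUniformlyOn_iff_forall_isCompact hU] at h ⊢
  intro K hKU hK
  exact (h K hKU hK).comp_cexp
    (hK.image_of_continuousOn (continuous_re.comp_continuousOn (hf.mono hKU))).bddAbove

noncomputable def logFactor (k a z : ℂ) : ℂ := -(k * a * z) - k * log (1 - a * z)

theorem exp_logFactor {k a z : ℂ} (hz : 1 - a * z ≠ 0) :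
    cexp (logFactor k a z) = cexp (-(k * a * z)) * (1 - a * z) ^ (-k) := by
  rw [cpow_def_of_ne_zero hz, ← exp_add, logFactor]
  ring_nf

theorem differentiableAt_logFactor (k : ℂ) {a z : ℂ} (hz : 1 - a * z ∈ slitPlane) :
    DifferentiableAt ℂ (logFactor k a) z := by
  unfold logFactor
  fun_prop (disch := exact hz)

theorem norm_logFactor_le (k : ℂ) {a z : ℂ} (hz : ‖a * z‖ ≤ 1 / 2) :
    ‖logFactor k a z‖ ≤ ‖k‖ * ‖a * z‖ ^ 2 := by
  set w := -(a * z) with hw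
  have hnorm : ‖w‖ = ‖a * z‖ := norm_neg _
  have hw2 : ‖w‖ ≤ 1 / 2 := hnorm ▸ hz
  have hlog : ‖log (1 + w) - w‖ ≤ ‖w‖ ^ 2 := calc
    _ ≤ ‖w‖ ^ 2 * (1 - ‖w‖)⁻¹ / 2 := norm_log_one_add_sub_self_le (by linarith)
    _ ≤ ‖w‖ ^ 2 * 2 / 2 := by
      gcongr
      rw [inv_le_comm₀ (by linarith) two_pos]
      linarith
    _ = ‖w‖ ^ 2 := by ring
  have hfactor : logFactor k a z = -k * (log (1 + w) - w) := by
    rw [logFactor, hw, ← sub_eq_add_neg]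
    ring
  rw [hfactor, norm_mul, norm_neg, ← hnorm]
  gcongr

theorem tendstoUniformlyOn_sum_logFactor (k : ℂ) {a : ℕ → ℂ} (ha : Summable fun l => ‖a l‖ ^ 2)
    {K : Set ℂ} (hK : Bornology.IsBounded K) :
    TendstoUniformlyOn (fun N z => ∑ l ∈ range N, logFactor k (a l) z)
      (fun z => ∑' l, logFactor k (a l) z) atTop K := by
  obtain ⟨R, hR0, hR⟩ := hK.exists_pos_norm_le
  refine tendstoUniformlyOn_tsum_nat_eventually (ha.mul_left (‖k‖ * R ^ 2)) ?_
  have hsmall : ∀ᶠ l in atTop, ‖a l‖ ^ 2 ≤ (1 / (2 * R)) ^ 2 :=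
    ha.tendsto_atTop_zero.eventually_le_const (by positivity)
  filter_upwards [hsmall] with l hl z hz
  have haR : ‖a l‖ * R ≤ 1 / 2 := by
    rw [pow_le_pow_iff_left₀ (norm_nonneg _) (by positivity) two_ne_zero] at hl
    calc ‖a l‖ * R ≤ 1 / (2 * R) * R := by gcongr
      _ = 1 / 2 := by field_simp
  have haz : ‖a l * z‖ ≤ ‖a l‖ * R := by
    rw [norm_mul]
    gcongr
    exact hR z hz
  calc ‖logFactor k (a l) z‖ ≤ ‖k‖ * ‖a l * z‖ ^ 2 := norm_logFactor_le k (haz.trans haR)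
    _ ≤ ‖k‖ * (‖a l‖ * R) ^ 2 := by gcongr
    _ = ‖k‖ * R ^ 2 * ‖a l‖ ^ 2 := by ring

section SlitRegion

variable (k : ℂ) {a : ℕ → ℂ} {h : ℂ → ℂ} {U : Set ℂ}

theorem differentiableOn_add_sum_logFactor (hh : Differentiable ℂ h)
    (hslit : ∀ z ∈ U, ∀ l, 1 - a l * z ∈ slitPlane) (N : ℕ) :
    DifferentiableOn ℂ (fun z => h z + ∑ l ∈ range N, logFactor k (a l) z) U := fun z hz =>
  (hh z |>.add (DifferentiableAt.fun_sum fun l _ =>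
    differentiableAt_logFactor k (hslit z hz l))).differentiableWithinAt

theorem tendstoLocallyUniformlyOn_exp_add_sum_logFactor (ha : Summable fun l => ‖a l‖ ^ 2)
    (hh : Differentiable ℂ h) (hU : IsOpen U) (hslit : ∀ z ∈ U, ∀ l, 1 - a l * z ∈ slitPlane) :
    TendstoLocallyUniformlyOn (fun N z => cexp (h z + ∑ l ∈ range N, logFactor k (a l) z))
      (fun z => cexp (h z + ∑' l, logFactor k (a l) z)) atTop U := by
  refine TendstoLocallyUniformlyOn.cexp ?_
    (Frequently.of_forall fun N => (differentiableOn_add_sum_logFactor k hh hslit N).continuousOn)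
    hU
  rw [tendstoLocallyUniformlyOn_iff_forall_isCompact hU]
  intro K _ hK
  have hsum := tendstoUniformlyOn_sum_logFactor k ha hK.isBounded
  rw [Metric.tendstoUniformlyOn_iff] at hsum ⊢
  simpa only [dist_add_left] using hsum

theorem exists_differentiableOn_tendstoLocallyUniformlyOn_exp_mul_prod
    (ha : Summable fun l => ‖a l‖ ^ 2) (hh : Differentiable ℂ h) (hU : IsOpen U)
    (hslit : ∀ z ∈ U, ∀ l, 1 - a l * z ∈ slitPlane) :
    ∃ Ψ : ℂ → ℂ, DifferentiableOn ℂ Ψ U ∧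
      TendstoLocallyUniformlyOn
        (fun N z => cexp (h z) * ∏ l ∈ range N, cexp (-(k * a l * z)) * (1 - a l * z) ^ (-k))
        Ψ atTop U := by
  have hlim := tendstoLocallyUniformlyOn_exp_add_sum_logFactor k ha hh hU hslit
  refine ⟨_, hlim.differentiableOn (Eventually.of_forall fun N =>
    (differentiableOn_add_sum_logFactor k hh hslit N).cexp) hU, hlim.congr fun N z hz => ?_⟩
  simp only [exp_add, exp_sum, exp_logFactor (slitPlane_ne_zero (hslit z hz _))]

end SlitRegion

theorem one_sub_ofReal_mul_mem_slitPlane {a b : ℝ} (hab : |a| ≤ |b|) {z : ℂ}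
    (hz : z.im ≠ 0 ∨ |b| * |z.re| < 1) : 1 - (a : ℂ) * z ∈ slitPlane := by
  rw [mem_slitPlane_iff]
  by_cases ha : a = 0
  · simp [ha]
  rcases hz with him | hre
  · right
    simp [ha, him]
  · left
    have : |a * z.re| < 1 := by
      rw [abs_mul]
      exact (mul_le_mul_of_nonneg_right hab (abs_nonneg _)).trans_lt hre
    simp only [sub_re, one_re, re_ofReal_mul]
    linarith [le_abs_self (a * z.re)]

theorem abs_le_abs_zero_of_VKle {α : ℕ → ℝ} (hdec : ∀ i, VKle (α (i + 1)) (α i)) (i : ℕ) :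
    |α i| ≤ |α 0| :=
  antitone_nat_of_succ_le (f := fun i => |α i|)
    (fun i => (hdec i).elim le_of_lt fun h => h.1.le) (Nat.zero_le i)

theorem psi_holomorphic_general (k : ℝ) (α : ℕ → ℝ) (β γ : ℝ)
    (hdec : ∀ i, VKle (α (i + 1)) (α i))
    (hsum : Summable fun i => (α i) ^ 2)
    (S : Set ℂ)
    (hS1 : ¬ (∀ i, α i = 0) → S = {z : ℂ | z.im ≠ 0 ∨ |z.re| < 1 / |α 0|}) :
    ∃ Ψ : ℂ → ℂ, DifferentiableOn ℂ Ψ S ∧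
      TendstoLocallyUniformlyOn
        (fun N (z : ℂ) =>
          Complex.exp ((k : ℂ) * (β : ℂ) * z + (k : ℂ) * (γ : ℂ) * z ^ 2 / 2) *
            ∏ l ∈ Finset.range N,
              Complex.exp (-((k : ℂ) * (α l : ℂ) * z)) * (1 - (α l : ℂ) * z) ^ (-(k : ℂ)))
        Ψ atTop S := by
  set U : Set ℂ := {z | z.im ≠ 0 ∨ |α 0| * |z.re| < 1}
  have hU : IsOpen U :=
    (isOpen_ne_fun continuous_im continuous_const).union
      (isOpen_lt (continuous_const.mul (continuous_abs.comp continuous_re)) continuous_const)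
  have hSU : S ⊆ U := by
    by_cases hα : α 0 = 0
    · intro z _
      simp [U, hα]
    rw [hS1 fun h => hα (h 0)]
    rintro z (him | hre)
    · exact Or.inl him
    · exact Or.inr (by rwa [lt_div_iff₀' (abs_pos.mpr hα)] at hre)
  have hsum' : Summable fun l => ‖(α l : ℂ)‖ ^ 2 := by simpa [norm_real, sq_abs] using hsum
  obtain ⟨Ψ, hdiff, hlim⟩ := exists_differentiableOn_tendstoLocallyUniformlyOn_exp_mul_prod
    (k : ℂ) hsum' (h := fun z => (k : ℂ) * β * z + (k : ℂ) * γ * z ^ 2 / 2) (by fun_prop) hU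
    fun z hz l => one_sub_ofReal_mul_mem_slitPlane (abs_le_abs_zero_of_VKle hdec l) hz
  exact ⟨Ψ, hdiff.mono hSU, hlim.mono hSU⟩

/-- For `ω = (α,β,γ) ∈ Ω`, the infinite product
`Ψ(ω;z) = e^{kβz + kγz²/2} ∏_l e^{-kα_l z}(1-α_l z)^{-k}` converges locally uniformly on
`S = ℂ \ ((-∞,-1/|α_1|] ∪ [1/|α_1|,∞))` (resp. `S = ℂ` if `α ≡ 0`) and defines a
holomorphic function on `S`. -/
theorem psi_holomorphic (k : ℝ) (hk : 0 < k) (α : ℕ → ℝ) (β γ : ℝ)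
    (hdec : ∀ i, VKle (α (i + 1)) (α i))
    (hsum : Summable fun i => (α i) ^ 2)
    (hγ : 0 ≤ γ)
    (S : Set ℂ)
    (hS0 : (∀ i, α i = 0) → S = Set.univ)
    (hS1 : ¬ (∀ i, α i = 0) → S = {z : ℂ | z.im ≠ 0 ∨ |z.re| < 1 / |α 0|}) :
    ∃ Ψ : ℂ → ℂ, DifferentiableOn ℂ Ψ S ∧
      TendstoLocallyUniformlyOn
        (fun N (z : ℂ) =>
          Complex.exp ((k : ℂ) * (β : ℂ) * z + (k : ℂ) * (γ : ℂ) * z ^ 2 / 2) *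
            ∏ l ∈ Finset.range N,
              Complex.exp (-((k : ℂ) * (α l : ℂ) * z)) * (1 - (α l : ℂ) * z) ^ (-(k : ℂ)))
        Ψ atTop S :=
  psi_holomorphic_general k α β γ hdec hsum S hS1
end

section
/- Fix k > 0 and let (λ(n))_{n∈ℕ} be a Vershik–Kerov sequence with VK parameters ω = (α, β, γ). Then there exists ε > 0 such that the functions Φ_n(z) := ∏_{j=1}^n (1 − (λ(n)_j/n) z)^{−k} converge, as n → ∞, to Ψ(ω; z) uniformly on the closed disc {z ∈ ℂ : |z| ≤ ε}. -/
open Filter Topology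

/-- The function `Ψ(ω;z) = e^{kβz + kγz²/2} ∏_{l=1}^∞ e^{-kα_l z}(1-α_l z)^{-k}`. -/
noncomputable def Psi (k : ℝ) (α : ℕ → ℝ) (β γ : ℝ) (z : ℂ) : ℂ :=
  Complex.exp ((k : ℂ) * (β : ℂ) * z + (k : ℂ) * (γ : ℂ) * z ^ 2 / 2) *
    ∏' l : ℕ, Complex.exp (-((k : ℂ) * (α l : ℂ) * z)) * (1 - (α l : ℂ) * z) ^ (-(k : ℂ))

/-!
With `G w = -log (1 - w) - w - w ^ 2 / 2 = O(|w| ^ 3)` one has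
`(1 - w) ^ (-k) = exp (k (w + w ^ 2 / 2 + G w))`, so with `μ_j = λ(n)_j / n`
`Φ_n z = exp (k ((∑ μ_j) z + (∑ μ_j ^ 2) z ^ 2 / 2 + ∑_j G (μ_j z)))`, and likewise
`Ψ(ω; z) = exp (k (β z + δ z ^ 2 / 2 + ∑_l G (α_l z)))`. The first two sums tend to `β` and `δ`.
The `|μ_j|` decrease in `j` and their squares sum to at most some `C`, so `|μ_j| ≤ √(C / (j + 1))`;
on a disc of radius of order `1 / √C` the `j`-th term `G (μ_j z)` is therefore dominated by a
multiple of `(j + 1) ^ (-3/2)`, and Tannery's theorem gives uniform convergence of the `G`-series.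
The limiting exponent is bounded on the disc, where `exp` is therefore uniformly continuous.
-/

open Metric

theorem tendstoUniformlyOn_iff_tendsto_sub {ι α E : Type*} [AddGroup E] [UniformSpace E]
    [IsUniformAddGroup E] {F : ι → α → E} {f : α → E} {p : Filter ι} {s : Set α} :
    TendstoUniformlyOn F f p s ↔
      Tendsto (fun q : ι × α => F q.1 q.2 - f q.2) (p ×ˢ 𝓟 s) (𝓝 0) := by
  rw [tendstoUniformlyOn_iff_tendsto, uniformity_eq_comap_nhds_zero, tendsto_comap_iff]
  rfl

lemma eventually_mem_prod_principal {ι α : Type*} (p : Filter ι) (s : Set α) :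
    ∀ᶠ q : ι × α in p ×ˢ 𝓟 s, q.2 ∈ s :=
  Eventually.prod_inr (mem_principal_self s) p

lemma Filter.Tendsto.tendstoUniformlyOn_mul {ι α R : Type*} [NormedRing R] {p : Filter ι}
    {s : Set α} {c : ι → R} {c₀ : R} {g : α → R} {B : ℝ} (hc : Tendsto c p (𝓝 c₀))
    (hg : ∀ z ∈ s, ‖g z‖ ≤ B) :
    TendstoUniformlyOn (fun n z => c n * g z) (fun z => c₀ * g z) p s := by
  rw [tendstoUniformlyOn_iff_tendsto_sub]
  simp_rw [← sub_mul]
  refine ((tendsto_sub_nhds_zero_iff.2 hc).comp tendsto_fst).zero_mul_isBoundedUnder_le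
    (isBoundedUnder_of_eventually_le (a := B) ?_)
  filter_upwards [eventually_mem_prod_principal p s] with q hq using hg q.2 hq

lemma TendstoUniformlyOn.cexp {ι α : Type*} {p : Filter ι} {s : Set α} {A : ι → α → ℂ}
    {L : α → ℂ} {B : ℝ} (h : TendstoUniformlyOn A L p s) (hL : ∀ z ∈ s, (L z).re ≤ B) :
    TendstoUniformlyOn (fun n z => Complex.exp (A n z)) (fun z => Complex.exp (L z)) p s := by
  rw [tendstoUniformlyOn_iff_tendsto_sub] at h ⊢
  have hexp : Tendsto (fun q : ι × α => Complex.exp (A q.1 q.2 - L q.2) - 1)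
      (p ×ˢ 𝓟 s) (𝓝 0) := by
    simpa using ((Complex.continuous_exp.tendsto 0).comp h).sub_const 1
  have hbdd : ∀ᶠ q : ι × α in p ×ˢ 𝓟 s, ‖Complex.exp (L q.2)‖ ≤ Real.exp B := by
    filter_upwards [eventually_mem_prod_principal p s] with q hq
    rw [Complex.norm_exp]
    exact Real.exp_le_exp.2 (hL q.2 hq)
  refine (hexp.zero_mul_isBoundedUnder_le (isBoundedUnder_of_eventually_le hbdd)).congr
    fun q => ?_
  rw [sub_mul, ← Complex.exp_add, sub_add_cancel, one_mul]

theorem tendstoUniformlyOn_sum_range_of_dominated {α E : Type*} [NormedAddCommGroup E]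
    [CompleteSpace E] {f : ℕ → ℕ → α → E} {g : ℕ → α → E} {bound : ℕ → ℝ} {s : Set α}
    (h_sum : Summable bound) (hfg : ∀ j, TendstoUniformlyOn (f · j) (g j) atTop s)
    (h_bound : ∀ n j, j < n → ∀ z ∈ s, ‖f n j z‖ ≤ bound j) :
    TendstoUniformlyOn (fun n z => ∑ j ∈ Finset.range n, f n j z) (fun z => ∑' j, g j z)
      atTop s := by
  have hg : ∀ j, ∀ z ∈ s, ‖g j z‖ ≤ bound j := fun j z hz =>
    le_of_tendsto ((hfg j).tendsto_at hz).norm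
      ((eventually_gt_atTop j).mono fun n hn => h_bound n j hn z hz)
  have hg_sum : ∀ z ∈ s, Summable (g · z) := fun z hz => h_sum.of_norm_bounded (hg · z hz)
  -- Padding the finite sums with zeros makes them series, and Tannery's theorem along
  -- `atTop ×ˢ 𝓟 s` is uniform convergence on `s`.
  let trunc (n j : ℕ) (z : α) : E := if j < n then f n j z else 0
  have h_trunc : ∀ n z, ∑' j, trunc n j z = ∑ j ∈ Finset.range n, f n j z := fun n z => by
    rw [tsum_eq_sum (s := Finset.range n) fun j hj => if_neg (by simpa using hj)]
    exact Finset.sum_congr rfl fun j hj => if_pos (Finset.mem_range.1 hj)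
  simp_rw [tendstoUniformlyOn_iff_tendsto_sub] at hfg ⊢
  have key := tendsto_tsum_of_dominated_convergence (𝓕 := atTop ×ˢ 𝓟 s)
    (f := fun q j => trunc q.1 j q.2 - g j q.2) (g := fun _ => 0) (h_sum.mul_left 2)
    (fun j => (hfg j).congr' ?_) ?_
  · rw [tsum_zero] at key
    refine key.congr' ?_
    filter_upwards [eventually_mem_prod_principal atTop s] with q hq
    rw [Summable.tsum_sub (summable_of_ne_finset_zero (s := Finset.range q.1)
      fun j hj => if_neg (by simpa using hj)) (hg_sum q.2 hq), h_trunc]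
  · filter_upwards [(eventually_gt_atTop j).prod_inl (𝓟 s)] with q hq
    simp [trunc, hq]
  · filter_upwards [eventually_mem_prod_principal atTop s] with q hq j
    calc ‖trunc q.1 j q.2 - g j q.2‖ ≤ ‖trunc q.1 j q.2‖ + ‖g j q.2‖ := norm_sub_le _ _
      _ ≤ bound j + bound j := by
          gcongr
          · by_cases hj : j < q.1
            · simpa [trunc, hj] using h_bound q.1 j hj q.2 hq
            · simpa [trunc, hj] using (norm_nonneg _).trans (hg j q.2 hq)
          · exact hg j q.2 hq
      _ = 2 * bound j := by ring

noncomputable def logRemainder (w : ℂ) : ℂ := -Complex.log (1 - w) - w - w ^ 2 / 2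

lemma logRemainder_zero : logRemainder 0 = 0 := by simp [logRemainder]

lemma one_sub_cpow_neg {w : ℂ} (hw : w ≠ 1) (s : ℂ) :
    (1 - w) ^ (-s) = Complex.exp (s * (w + w ^ 2 / 2 + logRemainder w)) := by
  rw [Complex.cpow_def_of_ne_zero (sub_ne_zero.2 hw.symm), logRemainder]
  ring_nf

lemma hasDerivAt_logRemainder {w : ℂ} (hw : ‖w‖ < 1) :
    HasDerivAt logRemainder (w ^ 2 / (1 - w)) w := by
  have hslit : 1 - w ∈ Complex.slitPlane := by
    simpa [sub_eq_add_neg] using Complex.mem_slitPlane_of_norm_lt_one (z := -w) (by simpa)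
  have hne : 1 - w ≠ 0 := Complex.slitPlane_ne_zero hslit
  have hlog := (Complex.hasDerivAt_log hslit).comp w ((hasDerivAt_id w).const_sub 1)
  have h : HasDerivAt logRemainder (-((1 - w)⁻¹ * -1) - 1 - 2 * w ^ 1 / 2) w :=
    (hlog.neg.sub (hasDerivAt_id w)).sub ((hasDerivAt_pow 2 w).div_const 2)
  convert h using 1
  field_simp
  ring

lemma norm_sq_div_one_sub_le {r : ℝ} (hr : r ≤ 1 / 2) {w : ℂ} (hw : ‖w‖ ≤ r) :
    ‖w ^ 2 / (1 - w)‖ ≤ 2 * r ^ 2 := by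
  have h_one_sub : 1 / 2 ≤ ‖1 - w‖ := by
    linarith [norm_sub_norm_le (1 : ℂ) w, norm_one (α := ℂ)]
  rw [norm_div, norm_pow, div_le_iff₀ (by linarith)]
  calc ‖w‖ ^ 2 ≤ r ^ 2 := by gcongr
    _ = 2 * r ^ 2 * (1 / 2) := by ring
    _ ≤ 2 * r ^ 2 * ‖1 - w‖ := by gcongr

lemma norm_logRemainder_sub_le {r : ℝ} (hr : r ≤ 1 / 2) {w₁ w₂ : ℂ} (h₁ : ‖w₁‖ ≤ r)
    (h₂ : ‖w₂‖ ≤ r) : ‖logRemainder w₁ - logRemainder w₂‖ ≤ 2 * r ^ 2 * ‖w₁ - w₂‖ := by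
  refine (convex_closedBall (0 : ℂ) r).norm_image_sub_le_of_norm_hasDerivWithin_le
    (fun w hw => (hasDerivAt_logRemainder ?_).hasDerivWithinAt)
    (fun w hw => norm_sq_div_one_sub_le hr (mem_closedBall_zero_iff.1 hw))
    (mem_closedBall_zero_iff.2 h₂) (mem_closedBall_zero_iff.2 h₁)
  linarith [mem_closedBall_zero_iff.1 hw]

lemma norm_logRemainder_le {w : ℂ} (hw : ‖w‖ ≤ 1 / 2) : ‖logRemainder w‖ ≤ 2 * ‖w‖ ^ 3 := by
  simpa [logRemainder_zero, pow_succ, mul_assoc] using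
    norm_logRemainder_sub_le (w₂ := 0) hw le_rfl (by simp)

lemma norm_mul_le_of_mem_closedBall {x z : ℂ} {c ε : ℝ} (hx : ‖x‖ ≤ c)
    (hz : z ∈ closedBall 0 ε) : ‖x * z‖ ≤ c * ε :=
  (norm_mul_le _ _).trans
    (mul_le_mul hx (mem_closedBall_zero_iff.1 hz) (norm_nonneg _) ((norm_nonneg _).trans hx))

lemma norm_logRemainder_mul_le {x z : ℂ} {c ε : ℝ} (hcε : c * ε ≤ 1 / 2) (hx : ‖x‖ ≤ c)
    (hz : z ∈ closedBall 0 ε) : ‖logRemainder (x * z)‖ ≤ 2 * ε ^ 3 * c ^ 3 := by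
  have hxz := norm_mul_le_of_mem_closedBall hx hz
  calc ‖logRemainder (x * z)‖ ≤ 2 * ‖x * z‖ ^ 3 := norm_logRemainder_le (hxz.trans hcε)
    _ ≤ 2 * (c * ε) ^ 3 := by gcongr
    _ = 2 * ε ^ 3 * c ^ 3 := by ring

lemma tendstoUniformlyOn_logRemainder_mul {ι : Type*} {p : Filter ι} {x : ι → ℂ} {a : ℂ}
    {c ε : ℝ} (hcε : c * ε ≤ 1 / 2) (hx : ∀ᶠ n in p, ‖x n‖ ≤ c) (ha : ‖a‖ ≤ c)
    (hxa : Tendsto x p (𝓝 a)) :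
    TendstoUniformlyOn (fun n z => logRemainder (x n * z)) (fun z => logRemainder (a * z)) p
      (closedBall 0 ε) := by
  rw [tendstoUniformlyOn_iff_tendsto_sub]
  have hlim : Tendsto (fun q : ι × ℂ => 2 * (1 / 2) ^ 2 * (‖x q.1 - a‖ * ε))
      (p ×ˢ 𝓟 (closedBall 0 ε)) (𝓝 0) := by
    have := (((tendsto_iff_norm_sub_tendsto_zero.1 hxa).mul_const ε).const_mul
      (2 * (1 / 2 : ℝ) ^ 2)).comp (tendsto_fst (g := 𝓟 (closedBall (0 : ℂ) ε)))
    simpa only [zero_mul, mul_zero, Function.comp_def] using this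
  refine squeeze_zero_norm' ?_ hlim
  filter_upwards [hx.prod_inl _, eventually_mem_prod_principal p (closedBall 0 ε)] with q hxq hz
  calc ‖logRemainder (x q.1 * q.2) - logRemainder (a * q.2)‖
      ≤ 2 * (1 / 2) ^ 2 * ‖x q.1 * q.2 - a * q.2‖ :=
        norm_logRemainder_sub_le le_rfl ((norm_mul_le_of_mem_closedBall hxq hz).trans hcε)
          ((norm_mul_le_of_mem_closedBall ha hz).trans hcε)
    _ ≤ 2 * (1 / 2) ^ 2 * (‖x q.1 - a‖ * ε) := by
        rw [← sub_mul]
        gcongr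
        exact norm_mul_le_of_mem_closedBall le_rfl hz

lemma tendstoUniformlyOn_sum_range_logRemainder {x : ℕ → ℕ → ℂ} {a : ℕ → ℂ} {c : ℕ → ℝ}
    {ε : ℝ} (hc : Summable fun j => c j ^ 3) (hcε : ∀ j, c j * ε ≤ 1 / 2)
    (hx : ∀ n j, j < n → ‖x n j‖ ≤ c j) (ha : ∀ j, ‖a j‖ ≤ c j)
    (hxa : ∀ j, Tendsto (x · j) atTop (𝓝 (a j))) :
    TendstoUniformlyOn (fun n z => ∑ j ∈ Finset.range n, logRemainder (x n j * z))
      (fun z => ∑' j, logRemainder (a j * z)) atTop (closedBall 0 ε) :=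
  tendstoUniformlyOn_sum_range_of_dominated (hc.mul_left (2 * ε ^ 3))
    (fun j => tendstoUniformlyOn_logRemainder_mul (hcε j)
      ((eventually_gt_atTop j).mono fun n hn => hx n j hn) (ha j) (hxa j))
    (fun n j hj _ hz => norm_logRemainder_mul_le (hcε j) (hx n j hj) hz)

lemma norm_add_tsum_logRemainder_mul_le {a : ℕ → ℂ} {c : ℕ → ℝ} {b₁ b₂ z : ℂ} {ε : ℝ}
    (hc : Summable fun j => c j ^ 3) (hcε : ∀ j, c j * ε ≤ 1 / 2) (ha : ∀ j, ‖a j‖ ≤ c j)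
    (hz : z ∈ closedBall 0 ε) :
    ‖b₁ * z + b₂ * (z ^ 2 / 2) + ∑' j, logRemainder (a j * z)‖ ≤
      ‖b₁‖ * ε + ‖b₂‖ * (ε ^ 2 / 2) + 2 * ε ^ 3 * ∑' j, c j ^ 3 := by
  have hz' := mem_closedBall_zero_iff.1 hz
  refine norm_add₃_le.trans (add_le_add_three ?_ ?_ ?_)
  · rw [norm_mul]
    gcongr
  · rw [norm_mul, norm_div, norm_pow, Complex.norm_ofNat]
    gcongr
  · rw [← tsum_mul_left]
    exact tsum_of_norm_bounded (hc.mul_left _).hasSum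
      fun j => norm_logRemainder_mul_le (hcε j) (ha j) hz

lemma prod_one_sub_cpow_neg {ι : Type*} (t : Finset ι) (x : ι → ℂ) {z : ℂ}
    (hxz : ∀ j ∈ t, x j * z ≠ 1) (s : ℂ) :
    ∏ j ∈ t, (1 - x j * z) ^ (-s) = Complex.exp (s * ((∑ j ∈ t, x j) * z +
      (∑ j ∈ t, x j ^ 2) * (z ^ 2 / 2) + ∑ j ∈ t, logRemainder (x j * z))) := by
  rw [Finset.prod_congr rfl fun j hj => one_sub_cpow_neg (hxz j hj) s, ← Complex.exp_sum]
  simp only [Finset.sum_mul, Finset.mul_sum, ← Finset.sum_add_distrib]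
  exact congrArg _ (Finset.sum_congr rfl fun j _ => by ring)

lemma Psi_eq_exp {k β γ : ℝ} {α : ℕ → ℝ} {z : ℂ} (hα : Summable fun l => α l ^ 2)
    (hαz : ∀ l, (α l : ℂ) * z ≠ 1) (hsum : Summable fun l => logRemainder (α l * z)) :
    Psi k α β γ z = Complex.exp (k * (β * z + (γ + ∑' l, α l ^ 2 : ℝ) * (z ^ 2 / 2) +
      ∑' l, logRemainder (α l * z))) := by
  have hfac : ∀ l, Complex.exp (-(k * α l * z)) * (1 - α l * z) ^ (-(k : ℂ)) =
      Complex.exp (k * ((α l ^ 2 : ℝ) * (z ^ 2 / 2)) + k * logRemainder (α l * z)) := fun l => by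
    rw [one_sub_cpow_neg (hαz l), ← Complex.exp_add]
    push_cast
    ring_nf
  have hHasSum := (((Complex.hasSum_ofReal.2 hα.hasSum).mul_right (z ^ 2 / 2)).mul_left
    (k : ℂ)).add (hsum.hasSum.mul_left (k : ℂ))
  have htprod : ∏' l, Complex.exp (k * ((α l ^ 2 : ℝ) * (z ^ 2 / 2)) + k * logRemainder (α l * z))
      = Complex.exp (k * ((∑' l, α l ^ 2 : ℝ) * (z ^ 2 / 2)) + k * ∑' l, logRemainder (α l * z)) :=
    hHasSum.cexp.tprod_eq
  rw [Psi, tprod_congr hfac, htprod, ← Complex.exp_add]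
  push_cast
  ring_nf

lemma summable_sq_of_tendsto {x : ℕ → ℕ → ℝ} {a : ℕ → ℝ} {C : ℝ}
    (hxa : ∀ j, Tendsto (x · j) atTop (𝓝 (a j))) (hC : ∀ n, ∑ j ∈ Finset.range n, x n j ^ 2 ≤ C) :
    Summable fun j => a j ^ 2 :=
  summable_of_sum_range_le (fun _ => sq_nonneg _) fun J =>
    le_of_tendsto (tendsto_finsetSum _ fun j _ => (hxa j).pow 2)
      ((eventually_ge_atTop J).mono fun n hn => (Finset.sum_le_sum_of_subset_of_nonneg
        (Finset.range_subset_range.2 hn) fun _ _ _ => sq_nonneg _).trans (hC n))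

theorem tendstoUniformlyOn_prod_one_sub_cpow_neg {x : ℕ → ℕ → ℝ} {a c : ℕ → ℝ} {β δ ε : ℝ}
    (k : ℝ) (hc : Summable fun j => c j ^ 3) (hcε : ∀ j, c j * ε ≤ 1 / 2)
    (hx : ∀ n j, j < n → |x n j| ≤ c j) (hxa : ∀ j, Tendsto (x · j) atTop (𝓝 (a j)))
    (hβ : Tendsto (fun n => ∑ j ∈ Finset.range n, x n j) atTop (𝓝 β))
    (hδ : Tendsto (fun n => ∑ j ∈ Finset.range n, x n j ^ 2) atTop (𝓝 δ)) :
    TendstoUniformlyOn (fun n z => ∏ j ∈ Finset.range n, (1 - (x n j : ℂ) * z) ^ (-(k : ℂ)))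
      (Psi k a β (δ - ∑' j, a j ^ 2)) atTop (closedBall 0 ε) := by
  obtain ⟨C, hC⟩ := hδ.bddAbove_range
  have ha2 := summable_sq_of_tendsto hxa fun n => hC ⟨n, rfl⟩
  have hx' : ∀ n j, j < n → ‖(x n j : ℂ)‖ ≤ c j := by simpa using hx
  have ha' : ∀ j, ‖(a j : ℂ)‖ ≤ c j := fun j => by
    simpa using le_of_tendsto (hxa j).abs ((eventually_gt_atTop j).mono fun n => hx n j)
  have hne {y : ℂ} {j : ℕ} (hy : ‖y‖ ≤ c j) {z : ℂ} (hz : z ∈ closedBall 0 ε) : y * z ≠ 1 :=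
    fun h => by
      linarith [h ▸ (norm_mul_le_of_mem_closedBall hy hz).trans (hcε j), norm_one (α := ℂ)]
  have hz : ∀ z ∈ closedBall (0 : ℂ) ε, ‖z‖ ≤ ε := fun z => mem_closedBall_zero_iff.1
  have hz2 : ∀ z ∈ closedBall (0 : ℂ) ε, ‖z ^ 2 / 2‖ ≤ ε ^ 2 / 2 := fun z hz' => by
    rw [norm_div, norm_pow, Complex.norm_ofNat]
    gcongr
    exact hz z hz'
  have hE := ((((Complex.continuous_ofReal.tendsto β).comp hβ).tendstoUniformlyOn_mul hz).add
    (((Complex.continuous_ofReal.tendsto δ).comp hδ).tendstoUniformlyOn_mul hz2)).add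
    (tendstoUniformlyOn_sum_range_logRemainder hc hcε hx' ha' fun j =>
      (Complex.continuous_ofReal.tendsto _).comp (hxa j))
  have hkE : TendstoUniformlyOn (fun n z => (k : ℂ) * ((∑ j ∈ Finset.range n, (x n j : ℂ)) * z
      + (∑ j ∈ Finset.range n, (x n j : ℂ) ^ 2) * (z ^ 2 / 2)
      + ∑ j ∈ Finset.range n, logRemainder (x n j * z)))
      (fun z => k * (β * z + δ * (z ^ 2 / 2) + ∑' j, logRemainder (a j * z)))
      atTop (closedBall 0 ε) := by
    simpa only [Function.comp_def, smul_eq_mul, Pi.add_apply, Complex.ofReal_sum,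
      Complex.ofReal_pow] using (uniformContinuous_const_smul (k : ℂ)).comp_tendstoUniformlyOn hE
  refine ((hkE.cexp fun z hz' => (Complex.re_le_norm _).trans (norm_mul_le_of_le le_rfl
    (norm_add_tsum_logRemainder_mul_le hc hcε ha' hz'))).congr ?_).congr_right ?_
  · exact Eventually.of_forall fun n z hz' => (prod_one_sub_cpow_neg _ _
      (fun j hj => hne (hx' n j (Finset.mem_range.1 hj)) hz') _).symm
  · intro z hz'
    rw [Psi_eq_exp ha2 (fun l => hne (ha' l) hz') (.of_norm_bounded (hc.mul_left (2 * ε ^ 3))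
      fun j => norm_logRemainder_mul_le (hcε j) (ha' j) hz'), sub_add_cancel]

lemma VKle.abs_le_s8 {x y : ℝ} (h : VKle x y) : |x| ≤ |y| :=
  h.elim le_of_lt fun h => h.1.le

lemma abs_le_sqrt_div_of_sum_sq_le {a : ℕ → ℝ} {n j : ℕ} {C : ℝ}
    (ha : ∀ i, i + 1 < n → |a (i + 1)| ≤ |a i|) (hC : ∑ i ∈ Finset.range n, a i ^ 2 ≤ C)
    (hj : j < n) : |a j| ≤ √C / √(j + 1) := by
  have hanti : AntitoneOn (fun i => |a i|) (Set.Iio n) :=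
    antitoneOn_of_succ_le Set.ordConnected_Iio fun i _ _ hi => by
      simpa [Order.succ_eq_add_one] using ha i (by simpa [Order.succ_eq_add_one] using hi)
  have hsq : (j + 1) * a j ^ 2 ≤ C :=
    calc (j + 1) * a j ^ 2 = ∑ _i ∈ Finset.range (j + 1), a j ^ 2 := by simp
      _ ≤ ∑ i ∈ Finset.range (j + 1), a i ^ 2 := Finset.sum_le_sum fun i hi =>
          sq_le_sq.2 (hanti (Finset.mem_range_succ_iff.1 hi |>.trans_lt hj) hj
            (Finset.mem_range_succ_iff.1 hi))
      _ ≤ ∑ i ∈ Finset.range n, a i ^ 2 := Finset.sum_le_sum_of_subset_of_nonneg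
          (Finset.range_subset_range.2 hj) fun _ _ _ => sq_nonneg _
      _ ≤ C := hC
  rw [← Real.sqrt_div' C (by positivity)]
  exact Real.abs_le_sqrt (by rw [le_div_iff₀ (by positivity)]; linarith)

lemma summable_div_sqrt_succ_pow_three (C : ℝ) : Summable fun j : ℕ => (C / √(j + 1)) ^ 3 := by
  refine ((Real.summable_one_div_nat_add_rpow 1 (3 / 2)).2 (by norm_num)).mul_left (C ^ 3)
    |>.congr fun j => ?_
  have hj : (0 : ℝ) ≤ j + 1 := by positivity
  rw [abs_of_nonneg hj, div_pow, Real.sqrt_eq_rpow, ← Real.rpow_mul_natCast hj, mul_one_div]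
  norm_num

theorem phi_tendsto_psi_general (k : ℝ)
    (Λ : ℕ → ℕ → ℝ) (α : ℕ → ℝ) (β δ γ : ℝ)
    (hdec : ∀ n i, i + 1 < n → VKle (Λ n (i + 1)) (Λ n i))
    (hα : ∀ i, Tendsto (fun n : ℕ => Λ n i / (n : ℝ)) atTop (𝓝 (α i)))
    (hβ : Tendsto (fun n : ℕ => (∑ i ∈ Finset.range n, Λ n i) / (n : ℝ)) atTop (𝓝 β))
    (hδ : Tendsto (fun n : ℕ => (∑ i ∈ Finset.range n, (Λ n i) ^ 2) / (n : ℝ) ^ 2)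
      atTop (𝓝 δ))
    (hγ : γ = δ - ∑' i, (α i) ^ 2) :
    ∃ ε : ℝ, 0 < ε ∧
      TendstoUniformlyOn
        (fun n (z : ℂ) =>
          ∏ j ∈ Finset.range n, (1 - ((Λ n j / (n : ℝ) : ℝ) : ℂ) * z) ^ (-(k : ℂ)))
        (Psi k α β γ) atTop (Metric.closedBall 0 ε) := by
  set μ : ℕ → ℕ → ℝ := fun n j => Λ n j / n
  have hp1 : Tendsto (fun n => ∑ j ∈ Finset.range n, μ n j) atTop (𝓝 β) := by
    simpa only [Finset.sum_div] using hβ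
  have hp2 : Tendsto (fun n => ∑ j ∈ Finset.range n, μ n j ^ 2) atTop (𝓝 δ) := by
    simpa only [μ, div_pow, Finset.sum_div] using hδ
  obtain ⟨C, hC⟩ := hp2.bddAbove_range
  have hμ (n j : ℕ) : j < n → |μ n j| ≤ √C / √(j + 1) :=
    abs_le_sqrt_div_of_sum_sq_le (fun i hi => by
      simpa only [μ, abs_div] using div_le_div_of_nonneg_right (hdec n i hi).abs_le_s8
        (abs_nonneg (n : ℝ))) (hC ⟨n, rfl⟩)
  have hcε (j : ℕ) : √C / √(j + 1) * (1 / (2 * √C + 1)) ≤ 1 / 2 := by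
    calc √C / √(j + 1) * (1 / (2 * √C + 1)) ≤ √C * (1 / (2 * √C + 1)) := by
          gcongr
          exact div_le_self (Real.sqrt_nonneg C) (Real.one_le_sqrt.2 (by simp))
      _ ≤ 1 / 2 := by
          rw [mul_one_div, div_le_iff₀ (by positivity)]
          linarith [Real.sqrt_nonneg C]
  subst hγ
  exact ⟨1 / (2 * √C + 1), by positivity, tendstoUniformlyOn_prod_one_sub_cpow_neg k
    (summable_div_sqrt_succ_pow_three √C) hcε hμ hα hp1 hp2⟩

/-- If `(λ(n))` is a VK sequence with parameters `ω = (α,β,γ)`, then the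
functions `Φ_n(z) = ∏_{j=1}^n (1 - (λ(n)_j/n) z)^{-k}` converge to `Ψ(ω;·)` uniformly on
some closed disc around `0`. -/
theorem phi_tendsto_psi (k : ℝ) (hk : 0 < k)
    (Λ : ℕ → ℕ → ℝ) (α : ℕ → ℝ) (β δ γ : ℝ)
    (hpad : ∀ n i, n ≤ i → Λ n i = 0)
    (hdec : ∀ n i, i + 1 < n → VKle (Λ n (i + 1)) (Λ n i))
    (hα : ∀ i, Tendsto (fun n : ℕ => Λ n i / (n : ℝ)) atTop (𝓝 (α i)))
    (hβ : Tendsto (fun n : ℕ => (∑ i ∈ Finset.range n, Λ n i) / (n : ℝ)) atTop (𝓝 β))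
    (hδ : Tendsto (fun n : ℕ => (∑ i ∈ Finset.range n, (Λ n i) ^ 2) / (n : ℝ) ^ 2)
      atTop (𝓝 δ))
    (hγ : γ = δ - ∑' i, (α i) ^ 2) :
    ∃ ε : ℝ, 0 < ε ∧
      TendstoUniformlyOn
        (fun n (z : ℂ) =>
          ∏ j ∈ Finset.range n, (1 - ((Λ n j / (n : ℝ) : ℝ) : ℂ) * z) ^ (-(k : ℂ)))
        (Psi k α β γ) atTop (Metric.closedBall 0 ε) :=
  phi_tendsto_psi_general k Λ α β δ γ hdec hα hβ hδ hγ
end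

section
/- Fix k > 0. There exists a constant C > 0, depending only on k, such that for every finitely supported real sequence λ one has g_4(λ) ≤ C · g_2(λ)². Moreover 2 g_2(λ) = k² p_1(λ)² + k p_2(λ), so g_2(λ) ≥ 0. -/
open Filter Topology

/-- The Pochhammer symbol `(a)_j = a(a+1)⋯(a+j-1)`. -/
noncomputable def poch (a : ℝ) (j : ℕ) : ℝ := ∏ i ∈ Finset.range j, (a + i)

/-- `g_j(λ) = ∑_{m : Σ m_l = j} ∏_l ((k)_{m_l}/m_l!) λ_l^{m_l}`, the Taylor coefficients
of `z ↦ ∏_l (1-λ_l z)^{-k}` at `z = 0`. -/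
noncomputable def gcoef (k : ℝ) (lam : ℕ → ℝ) (j : ℕ) : ℝ :=
  ∑' m : {m : ℕ →₀ ℕ // (m : ℕ →₀ ℕ).sum (fun _ e => e) = j},
    ∏ l ∈ (m : ℕ →₀ ℕ).support,
      (poch k ((m : ℕ →₀ ℕ) l) / (Nat.factorial ((m : ℕ →₀ ℕ) l)) * lam l ^ ((m : ℕ →₀ ℕ) l))

/-!
`g_j(λ)` is the coefficient of `z ^ j` in the finite product `∏_l (1 - λ_l z)^(-k)`, so induction
over the support of `λ` writes `g_2` and `g_4` as polynomials in the power sums `p_1, …, p_4`.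
Then `p_4 ≤ p_2²` and, by Cauchy–Schwarz, `p_3² ≤ p_2 p_4 ≤ p_2³`; AM-GM turns the latter into
`p_1 p_3 ≤ (p_2² + p_1² p_2) / 2`, after which each monomial of `g_4` is bounded by a monomial of
`(4 + 2 / k) g_2² = (k² + k / 2) (k p_1² + p_2)²`.
-/

open PowerSeries Finset

noncomputable def powerSum {ι : Type*} (s : Finset ι) (x : ι → ℝ) (m : ℕ) : ℝ := ∑ i ∈ s, x i ^ m

lemma powerSum_insert {ι : Type*} [DecidableEq ι] {s : Finset ι} {a : ι} (ha : a ∉ s)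
    (x : ι → ℝ) (m : ℕ) : powerSum (insert a s) x m = x a ^ m + powerSum s x m :=
  sum_insert ha

noncomputable def negBinomialSeries (k x : ℝ) : PowerSeries ℝ :=
  mk fun n => poch k n / n.factorial * x ^ n

@[simp] lemma coeff_negBinomialSeries (k x : ℝ) (n : ℕ) :
    coeff n (negBinomialSeries k x) = poch k n / n.factorial * x ^ n :=
  coeff_mk _ _

lemma coeff_negBinomialSeries_mul (k x : ℝ) (φ : PowerSeries ℝ) (n : ℕ) :
    coeff n (negBinomialSeries k x * φ) =
      ∑ i ∈ range (n + 1), poch k i / i.factorial * x ^ i * coeff (n - i) φ := by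
  simp [coeff_mul, Nat.sum_antidiagonal_eq_sum_range_succ_mk]

section
variable {ι : Type*} [DecidableEq ι] (k : ℝ) (s : Finset ι) (x : ι → ℝ)

local notation "P" => ∏ i ∈ s, negBinomialSeries k (x i)
local notation "p" => powerSum s x

lemma coeff_zero_prod_negBinomialSeries : coeff 0 P = 1 := by
  induction s using Finset.induction_on with
  | empty => simp
  | insert a s ha ih => simp [prod_insert ha, coeff_negBinomialSeries_mul, ih, poch]

lemma coeff_one_prod_negBinomialSeries : coeff 1 P = k * p 1 := by
  induction s using Finset.induction_on with
  | empty => simp [powerSum]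
  | insert a s ha ih =>
    rw [prod_insert ha, coeff_negBinomialSeries_mul]
    simp only [sum_range_succ, sum_range_zero, tsub_self, tsub_zero, poch, prod_range_succ,
      prod_range_zero, Nat.factorial, powerSum_insert ha, ih, coeff_zero_prod_negBinomialSeries]
    push_cast
    ring

lemma coeff_two_prod_negBinomialSeries : coeff 2 P = (k ^ 2 * p 1 ^ 2 + k * p 2) / 2 := by
  induction s using Finset.induction_on with
  | empty => simp [powerSum]
  | insert a s ha ih =>
    rw [prod_insert ha, coeff_negBinomialSeries_mul]
    simp only [sum_range_succ, sum_range_zero, tsub_self, tsub_zero, Nat.reduceSub, poch,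
      prod_range_succ, prod_range_zero, Nat.factorial, powerSum_insert ha, ih,
      coeff_zero_prod_negBinomialSeries, coeff_one_prod_negBinomialSeries]
    push_cast
    ring

lemma coeff_three_prod_negBinomialSeries :
    coeff 3 P = k ^ 3 * p 1 ^ 3 / 6 + k ^ 2 * p 1 * p 2 / 2 + k * p 3 / 3 := by
  induction s using Finset.induction_on with
  | empty => simp [powerSum]
  | insert a s ha ih =>
    rw [prod_insert ha, coeff_negBinomialSeries_mul]
    simp only [sum_range_succ, sum_range_zero, tsub_self, tsub_zero, Nat.reduceSub, poch,
      prod_range_succ, prod_range_zero, Nat.factorial, powerSum_insert ha, ih,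
      coeff_zero_prod_negBinomialSeries, coeff_one_prod_negBinomialSeries,
      coeff_two_prod_negBinomialSeries]
    push_cast
    ring

lemma coeff_four_prod_negBinomialSeries :
    coeff 4 P = k ^ 4 * p 1 ^ 4 / 24 + k ^ 3 * p 1 ^ 2 * p 2 / 4 + k ^ 2 * p 2 ^ 2 / 8
      + k ^ 2 * p 1 * p 3 / 3 + k * p 4 / 4 := by
  induction s using Finset.induction_on with
  | empty => simp [powerSum]
  | insert a s ha ih =>
    rw [prod_insert ha, coeff_negBinomialSeries_mul]
    simp only [sum_range_succ, sum_range_zero, tsub_self, tsub_zero, Nat.reduceSub, poch,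
      prod_range_succ, prod_range_zero, Nat.factorial, powerSum_insert ha, ih,
      coeff_zero_prod_negBinomialSeries, coeff_one_prod_negBinomialSeries,
      coeff_two_prod_negBinomialSeries, coeff_three_prod_negBinomialSeries]
    push_cast
    ring
end

lemma gcoef_eq_coeff_prod (k : ℝ) {lam : ℕ → ℝ} {S : Finset ℕ} (hS : Function.support lam ⊆ S)
    (j : ℕ) : gcoef k lam j = coeff j (∏ l ∈ S, negBinomialSeries k (lam l)) := by
  classical
  set f : (ℕ →₀ ℕ) → ℝ := fun m => m.prod fun l e => poch k e / e.factorial * lam l ^ e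
  have hgcoef : gcoef k lam j = ∑' m, {m : ℕ →₀ ℕ | m.sum (fun _ e => e) = j}.indicator f m := by
    rw [gcoef, ← _root_.tsum_subtype]; rfl
  have hf_eq : ∀ m : ℕ →₀ ℕ, m.support ⊆ S →
      f m = ∏ l ∈ S, coeff (m l) (negBinomialSeries k (lam l)) := fun m hm => by
      simpa [f] using Finsupp.prod_of_support_subset m hm
        (fun l e => poch k e / e.factorial * lam l ^ e) (by simp [poch])
  have hf_zero : ∀ m : ℕ →₀ ℕ, ¬ m.support ⊆ S → f m = 0 := by
    intro m hm
    obtain ⟨l, hl, hlS⟩ := not_subset.mp hm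
    have hlam : lam l = 0 := Function.notMem_support.mp fun h => hlS (hS h)
    exact prod_eq_zero hl (by simp [hlam, Finsupp.mem_support_iff.mp hl])
  have hdeg : ∀ m : ℕ →₀ ℕ, m.support ⊆ S → m.sum (fun _ e => e) = S.sum m :=
    fun m hm => Finsupp.sum_of_support_subset m hm _ (fun _ _ => rfl)
  rw [hgcoef, coeff_prod, tsum_eq_sum (s := finsuppAntidiag S j)]
  · refine sum_congr rfl fun m hm => ?_
    obtain ⟨hsum, hsub⟩ := mem_finsuppAntidiag.mp hm
    rw [Set.indicator_of_mem (by simp [hdeg m hsub, hsum]), hf_eq m hsub]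
  · intro m hm
    by_cases hsub : m.support ⊆ S
    · refine Set.indicator_of_notMem (fun h => hm (mem_finsuppAntidiag.mpr ⟨?_, hsub⟩)) _
      exact (hdeg m hsub).symm.trans h
    · simp [Set.indicator, hf_zero m hsub]

section
variable {ι : Type*} (s : Finset ι) (x : ι → ℝ)

lemma powerSum_two_nonneg : 0 ≤ powerSum s x 2 := sum_nonneg fun i _ => sq_nonneg (x i)

lemma powerSum_four_le_sq : powerSum s x 4 ≤ powerSum s x 2 ^ 2 := by
  simpa [powerSum, ← pow_mul] using sum_sq_le_sq_sum_of_nonneg fun i _ => sq_nonneg (x i)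

lemma sq_powerSum_three_le : powerSum s x 3 ^ 2 ≤ powerSum s x 2 ^ 3 :=
  calc powerSum s x 3 ^ 2 = (∑ i ∈ s, x i * x i ^ 2) ^ 2 := by simp only [powerSum, ← pow_succ']
    _ ≤ powerSum s x 2 * powerSum s x 4 :=
      (sum_mul_sq_le_sq_mul_sq s x fun i => x i ^ 2).trans_eq (by simp only [powerSum, ← pow_mul])
    _ ≤ powerSum s x 2 ^ 3 := by
      rw [pow_succ' _ 2]
      exact mul_le_mul_of_nonneg_left (powerSum_four_le_sq s x) (powerSum_two_nonneg s x)
end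

lemma quartic_le_sq_quadratic {k p₁ p₂ p₃ p₄ : ℝ} (hk : 0 < k) (hp₂ : 0 ≤ p₂)
    (hp₃ : p₃ ^ 2 ≤ p₂ ^ 3) (hp₄ : p₄ ≤ p₂ ^ 2) :
    k ^ 4 * p₁ ^ 4 / 24 + k ^ 3 * p₁ ^ 2 * p₂ / 4 + k ^ 2 * p₂ ^ 2 / 8 + k ^ 2 * p₁ * p₃ / 3
      + k * p₄ / 4 ≤ (4 + 2 / k) * ((k ^ 2 * p₁ ^ 2 + k * p₂) / 2) ^ 2 := by
  have hp₁₃ : p₁ * p₃ ≤ (p₂ ^ 2 + p₂ * p₁ ^ 2) / 2 := by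
    refine le_of_sq_le_sq ?_ (by positivity)
    nlinarith [sq_nonneg (p₂ ^ 2 - p₂ * p₁ ^ 2), mul_le_mul_of_nonneg_left hp₃ (sq_nonneg p₁)]
  have hC : (4 + 2 / k) * ((k ^ 2 * p₁ ^ 2 + k * p₂) / 2) ^ 2
      = k * (2 * k + 1) / 2 * (k * p₁ ^ 2 + p₂) ^ 2 := by
    field_simp
    ring
  rw [hC]
  have hk₂ := sq_nonneg k
  have hp₁ := sq_nonneg p₁
  nlinarith [mul_le_mul_of_nonneg_left hp₄ hk.le, mul_le_mul_of_nonneg_left hp₁₃ hk₂,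
    mul_nonneg (pow_nonneg hk.le 3) (mul_nonneg hp₁ hp₁),
    mul_nonneg (pow_nonneg hk.le 4) (mul_nonneg hp₁ hp₁),
    mul_nonneg (pow_nonneg hk.le 3) (mul_nonneg hp₁ hp₂),
    mul_nonneg hk₂ (mul_nonneg hp₁ hp₂),
    mul_nonneg hk₂ (mul_nonneg hp₂ hp₂), mul_nonneg hk.le (mul_nonneg hp₂ hp₂)]

section
variable {lam : ℕ → ℝ} {S : Finset ℕ}

lemma gcoef_two_eq_powerSum (k : ℝ) (hS : Function.support lam ⊆ S) :
    gcoef k lam 2 = (k ^ 2 * powerSum S lam 1 ^ 2 + k * powerSum S lam 2) / 2 := by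
  rw [gcoef_eq_coeff_prod k hS, coeff_two_prod_negBinomialSeries]

lemma gcoef_four_eq_powerSum (k : ℝ) (hS : Function.support lam ⊆ S) :
    gcoef k lam 4 = k ^ 4 * powerSum S lam 1 ^ 4 / 24
      + k ^ 3 * powerSum S lam 1 ^ 2 * powerSum S lam 2 / 4 + k ^ 2 * powerSum S lam 2 ^ 2 / 8
      + k ^ 2 * powerSum S lam 1 * powerSum S lam 3 / 3 + k * powerSum S lam 4 / 4 := by
  rw [gcoef_eq_coeff_prod k hS, coeff_four_prod_negBinomialSeries]

lemma tsum_pow_eq_powerSum (hS : Function.support lam ⊆ S) {m : ℕ} (hm : m ≠ 0) :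
    ∑' j, lam j ^ m = powerSum S lam m :=
  tsum_eq_sum fun j hj => by
    rw [Function.notMem_support.mp fun h => hj (hS h), zero_pow hm]
end

/-- There is `C > 0` depending only on `k` with `g_4(λ) ≤ C g_2(λ)²` for
all finitely supported real `λ`; moreover `2g_2(λ) = k²p_1(λ)² + kp_2(λ)`, so `g_2(λ) ≥ 0`. -/
theorem g4_le_g2_sq (k : ℝ) (hk : 0 < k) :
    (∃ C : ℝ, 0 < C ∧ ∀ lam : ℕ → ℝ, (Function.support lam).Finite →
      gcoef k lam 4 ≤ C * (gcoef k lam 2) ^ 2) ∧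
    (∀ lam : ℕ → ℝ, (Function.support lam).Finite →
      2 * gcoef k lam 2 = k ^ 2 * (∑' j, lam j) ^ 2 + k * (∑' j, (lam j) ^ 2) ∧
      0 ≤ gcoef k lam 2) := by
  refine ⟨⟨4 + 2 / k, by positivity, fun lam hf => ?_⟩, fun lam hf => ?_⟩
  · have hS := hf.coe_toFinset.superset
    rw [gcoef_four_eq_powerSum k hS, gcoef_two_eq_powerSum k hS]
    exact quartic_le_sq_quadratic hk (powerSum_two_nonneg _ _) (sq_powerSum_three_le _ _)
      (powerSum_four_le_sq _ _)
  · have hS := hf.coe_toFinset.superset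
    have hp₁ : ∑' j, lam j = powerSum hf.toFinset lam 1 := by
      simpa using tsum_pow_eq_powerSum hS one_ne_zero
    rw [gcoef_two_eq_powerSum k hS, hp₁, tsum_pow_eq_powerSum hS two_ne_zero]
    refine ⟨by ring, div_nonneg ?_ zero_le_two⟩
    exact add_nonneg (by positivity) (mul_nonneg hk.le (powerSum_two_nonneg _ _))
end

section
/- Let α = (α_i)_{i∈ℕ} be a real sequence and β ∈ ℝ. There exists a Vershik–Kerov sequence (λ(n)) with λ(n)_i ≥ 0 for all i and n whose VK parameters are (α, β, 0) if and only if β ≥ 0, α_1 ≥ α_2 ≥ … ≥ 0, and Σ_{i=1}^∞ α_i ≤ β. -/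
/-!
Necessity: nonnegative entries make `≪` the usual order, so the limits `α i` inherit
nonnegativity and monotonicity, and for every `M` the first `M` entries of row `n` carry at most
the whole row sum, whence `∑_{i<M} α i ≤ β` in the limit.

Sufficiency: with `e = β - ∑ α i ≥ 0`, the row `λ(n)_i = n α_i + e` (`i < n`) works. The constant
`e` contributes exactly `e` to `p₁(λ(n))/n`, but only `O(1/n)` to `p₂(λ(n))/n²`.
-/

open Filter Topology

open Finset

lemma vkle_iff_le {x y : ℝ} (hx : 0 ≤ x) (hy : 0 ≤ y) : VKle x y ↔ x ≤ y := by
  rw [VKle, abs_of_nonneg hx, abs_of_nonneg hy]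
  constructor
  · rintro (h | ⟨-, h⟩)
    exacts [h.le, h]
  · intro h
    rcases h.lt_or_eq with h | rfl
    exacts [Or.inl h, Or.inr ⟨rfl, le_rfl⟩]

lemma summable_sq_of_nonneg {α : ℕ → ℝ} (hα : ∀ i, 0 ≤ α i) (h : Summable α) :
    Summable fun i => α i ^ 2 := by
  refine .of_nonneg_of_le (fun i => sq_nonneg _) (fun i => ?_) (h.mul_left (∑' j, α j))
  rw [sq]
  exact mul_le_mul_of_nonneg_right (h.le_tsum i fun j _ => hα j) (hα i)

section Necessity

variable {Λ : ℕ → ℕ → ℝ} {α : ℕ → ℝ} (hΛ : ∀ n i, 0 ≤ Λ n i)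
  (hα : ∀ i, Tendsto (fun n : ℕ => Λ n i / n) atTop (𝓝 (α i)))
include hΛ hα

lemma nonneg_of_tendsto_div (i : ℕ) : 0 ≤ α i :=
  ge_of_tendsto' (hα i) fun n => div_nonneg (hΛ n i) n.cast_nonneg

lemma succ_le_of_tendsto_div (hvk : ∀ n i, i + 1 < n → VKle (Λ n (i + 1)) (Λ n i)) (i : ℕ) :
    α (i + 1) ≤ α i := by
  refine le_of_tendsto_of_tendsto (hα (i + 1)) (hα i) ?_
  filter_upwards [eventually_gt_atTop (i + 1)] with n hn
  have := (vkle_iff_le (hΛ n (i + 1)) (hΛ n i)).1 (hvk n i hn)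
  gcongr

lemma sum_range_le_of_tendsto_div {β : ℝ}
    (hβ : Tendsto (fun n : ℕ => (∑ i ∈ range n, Λ n i) / n) atTop (𝓝 β)) (M : ℕ) :
    ∑ i ∈ range M, α i ≤ β := by
  refine le_of_tendsto_of_tendsto (tendsto_finsetSum _ fun i _ => hα i) hβ ?_
  filter_upwards [eventually_ge_atTop M] with n hn
  rw [← sum_div]
  exact div_le_div_of_nonneg_right
    (sum_le_sum_of_subset_of_nonneg (range_subset_range.2 hn) fun i _ _ => hΛ n i) n.cast_nonneg

end Necessity

section Sufficiency

def vkWitness (α : ℕ → ℝ) (e : ℝ) (n i : ℕ) : ℝ := if i < n then n * α i + e else 0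

variable {α : ℕ → ℝ} {e : ℝ} {n i : ℕ}

lemma vkWitness_of_le (h : n ≤ i) : vkWitness α e n i = 0 := if_neg h.not_gt

lemma vkWitness_nonneg (hα : ∀ i, 0 ≤ α i) (he : 0 ≤ e) : 0 ≤ vkWitness α e n i := by
  unfold vkWitness
  split_ifs
  · exact add_nonneg (mul_nonneg n.cast_nonneg (hα i)) he
  · exact le_rfl

lemma vkWitness_succ_le (hα : ∀ i, α (i + 1) ≤ α i) (h : i + 1 < n) :
    vkWitness α e n (i + 1) ≤ vkWitness α e n i := by
  rw [vkWitness, vkWitness, if_pos h, if_pos (i.lt_succ_self.trans h)]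
  gcongr
  exact hα i

lemma sum_range_vkWitness (f : ℝ → ℝ) :
    ∑ i ∈ range n, f (vkWitness α e n i) = ∑ i ∈ range n, f (n * α i + e) :=
  sum_congr rfl fun i hi => by rw [vkWitness, if_pos (mem_range.1 hi)]

lemma sum_range_vkWitness_div (hn : n ≠ 0) :
    (∑ i ∈ range n, vkWitness α e n i) / n = ∑ i ∈ range n, α i + e := by
  simp only [sum_range_vkWitness fun x => x, sum_add_distrib, ← mul_sum, sum_const, card_range,
    nsmul_eq_mul]
  field_simp

lemma sum_range_sq_vkWitness_div (hn : n ≠ 0) :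
    (∑ i ∈ range n, vkWitness α e n i ^ 2) / n ^ 2
      = ∑ i ∈ range n, α i ^ 2 + 2 * e / n * ∑ i ∈ range n, α i + e ^ 2 / n := by
  rw [sum_range_vkWitness (· ^ 2)]
  simp only [add_sq, mul_pow, sum_add_distrib, ← mul_sum, ← sum_mul, sum_const, card_range,
    nsmul_eq_mul]
  field_simp

lemma tendsto_vkWitness_div (α : ℕ → ℝ) (e : ℝ) (i : ℕ) :
    Tendsto (fun n : ℕ => vkWitness α e n i / n) atTop (𝓝 (α i)) := by
  have : Tendsto (fun n : ℕ => α i + e / n) atTop (𝓝 (α i)) := by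
    simpa using tendsto_const_nhds.add (tendsto_const_div_atTop_nhds_zero_nat e)
  refine this.congr' ?_
  filter_upwards [eventually_gt_atTop i] with n hn
  have : (n : ℝ) ≠ 0 := Nat.cast_ne_zero.2 (Nat.ne_zero_of_lt hn)
  rw [vkWitness, if_pos hn]
  field_simp

variable {s : ℝ} (hs : Tendsto (fun n => ∑ i ∈ range n, α i) atTop (𝓝 s))
include hs

lemma tendsto_sum_vkWitness_div :
    Tendsto (fun n : ℕ => (∑ i ∈ range n, vkWitness α e n i) / n) atTop (𝓝 (s + e)) :=
  (hs.add_const e).congr' <| by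
    filter_upwards [eventually_ne_atTop 0] with n hn
    exact (sum_range_vkWitness_div hn).symm

lemma tendsto_sum_sq_vkWitness_div {q : ℝ}
    (hq : Tendsto (fun n => ∑ i ∈ range n, α i ^ 2) atTop (𝓝 q)) :
    Tendsto (fun n : ℕ => (∑ i ∈ range n, vkWitness α e n i ^ 2) / n ^ 2) atTop (𝓝 q) := by
  have := (hq.add ((tendsto_const_div_atTop_nhds_zero_nat (2 * e)).mul hs)).add
    (tendsto_const_div_atTop_nhds_zero_nat (e ^ 2))
  rw [zero_mul, add_zero, add_zero] at this
  refine this.congr' ?_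
  filter_upwards [eventually_ne_atTop 0] with n hn
  exact (sum_range_sq_vkWitness_div hn).symm

end Sufficiency

/-- There exists a Vershik–Kerov sequence with nonnegative entries and VK
parameters `(α, β, 0)` if and only if `β ≥ 0`, `α_1 ≥ α_2 ≥ … ≥ 0` and `∑ α_i ≤ β`. -/
theorem nonneg_vk_parameters (α : ℕ → ℝ) (β : ℝ) :
    (∃ Λ : ℕ → ℕ → ℝ,
      (∀ n i, n ≤ i → Λ n i = 0) ∧
      (∀ n i, 0 ≤ Λ n i) ∧
      (∀ n i, i + 1 < n → VKle (Λ n (i + 1)) (Λ n i)) ∧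
      (∀ i, Tendsto (fun n : ℕ => Λ n i / (n : ℝ)) atTop (𝓝 (α i))) ∧
      Tendsto (fun n : ℕ => (∑ i ∈ Finset.range n, Λ n i) / (n : ℝ)) atTop (𝓝 β) ∧
      Tendsto (fun n : ℕ => (∑ i ∈ Finset.range n, (Λ n i) ^ 2) / (n : ℝ) ^ 2)
        atTop (𝓝 (∑' i, (α i) ^ 2)))
    ↔ (0 ≤ β ∧ (∀ i, α (i + 1) ≤ α i) ∧ (∀ i, 0 ≤ α i) ∧
        Summable α ∧ ∑' i, α i ≤ β) := by
  constructor
  · rintro ⟨Λ, -, hΛ, hvk, hα, hβ, -⟩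
    have hα0 := nonneg_of_tendsto_div hΛ hα
    have hsum := sum_range_le_of_tendsto_div hΛ hα hβ
    have htsum := Real.tsum_le_of_sum_range_le hα0 hsum
    exact ⟨(tsum_nonneg hα0).trans htsum, succ_le_of_tendsto_div hΛ hα hvk, hα0,
      summable_of_sum_range_le hα0 hsum, htsum⟩
  · rintro ⟨-, hdec, hα0, hα, hβ⟩
    set e := β - ∑' i, α i
    have hΛ (n i : ℕ) : 0 ≤ vkWitness α e n i := vkWitness_nonneg hα0 (sub_nonneg.2 hβ)
    have hs := hα.hasSum.tendsto_sum_nat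
    refine ⟨vkWitness α e, fun n i => vkWitness_of_le, hΛ,
      fun n i h => (vkle_iff_le (hΛ n (i + 1)) (hΛ n i)).2 (vkWitness_succ_le hdec h),
      tendsto_vkWitness_div α e, ?_,
      tendsto_sum_sq_vkWitness_div hs (summable_sq_of_nonneg hα0 hα).hasSum.tendsto_sum_nat⟩
    simpa [e] using tendsto_sum_vkWitness_div (e := e) hs
end
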